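/- arXiv:2301.02536 — 2 statements merged into one kernel-verified Lean document; each statement's English description precedes it below -/
import Mathlib

section
/- Let x₀ ≠ 0 with β̲_A(x₀) > 0 and x₁ with β̄_A(x₁) < 0 (or x₁ = 0). Then β̲_A(x₀ + x₁) ≥ β̲_A(x₀). -/
open Filter Topology

noncomputable section

abbrev Euc (d : ℕ) := EuclideanSpace ℝ (Fin d)

/-- forward product `A(m+k-1) ⋯ A(m)` -/
def fwd {d : ℕ} (A : ℕ → (Euc d →L[ℝ] Euc d)) (m : ℕ) : ℕ → (Euc d →L[ℝ] Euc d)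
  | 0 => 1
  | k + 1 => A (m + k) * fwd A m k

/-- backward product `Ainv(n) ⋯ Ainv(n+k-1)` -/
def bwd {d : ℕ} (Ainv : ℕ → (Euc d →L[ℝ] Euc d)) (n : ℕ) : ℕ → (Euc d →L[ℝ] Euc d)
  | 0 => 1
  | k + 1 => bwd Ainv n k * Ainv (n + k)

/-- transition matrix Φ_A(n,m) -/
def Phi {d : ℕ} (A Ainv : ℕ → (Euc d →L[ℝ] Euc d)) (n m : ℕ) : Euc d →L[ℝ] Euc d :=
  if m ≤ n then fwd A m (n - m) else bwd Ainv n (m - n)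

/-- A is a bounded sequence of invertible maps with bounded inverse sequence Ainv -/
def IsLyapunov {d : ℕ} (A Ainv : ℕ → (Euc d →L[ℝ] Euc d)) : Prop :=
  (∀ n, A n * Ainv n = 1) ∧ (∀ n, Ainv n * A n = 1) ∧
    BddAbove (Set.range fun n => ‖A n‖) ∧ BddAbove (Set.range fun n => ‖Ainv n‖)

/-- `‖A‖_∞ = sup_n ‖A(n)‖` -/
def supNorm {d : ℕ} (A : ℕ → (Euc d →L[ℝ] Euc d)) : ℝ := ⨆ n, ‖A n‖

/-- solution `x(n,x₀) = Φ_A(n,0) x₀` -/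
def sol {d : ℕ} (A : ℕ → (Euc d →L[ℝ] Euc d)) (n : ℕ) (x₀ : Euc d) : Euc d :=
  fwd A 0 n x₀

/-- `λ(n,m) = (1/(n-m)) ln (‖x(n,x₀)‖ / ‖x(m,x₀)‖)` -/
def lam {d : ℕ} (A : ℕ → (Euc d →L[ℝ] Euc d)) (n m : ℕ) (x₀ : Euc d) : ℝ :=
  Real.log (‖sol A n x₀‖ / ‖sol A m x₀‖) / ((n : ℝ) - (m : ℝ))

/-- upper Bohl exponent of a subspace -/
def upperBohl {d : ℕ} (A : ℕ → (Euc d →L[ℝ] Euc d)) (L : Set (Euc d)) : ℝ :=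
  ⨅ N : ℕ, sSup {r | ∃ n m : ℕ, ∃ x₀ : Euc d,
    N < n - m ∧ x₀ ∈ L ∧ x₀ ≠ 0 ∧ r = lam A n m x₀}

/-- lower Bohl exponent of a subspace -/
def lowerBohl {d : ℕ} (A : ℕ → (Euc d →L[ℝ] Euc d)) (L : Set (Euc d)) : ℝ :=
  ⨆ N : ℕ, sInf {r | ∃ n m : ℕ, ∃ x₀ : Euc d,
    N < n - m ∧ x₀ ∈ L ∧ x₀ ≠ 0 ∧ r = lam A n m x₀}

/-- upper Bohl exponent of a vector -/
def upperBohlVec {d : ℕ} (A : ℕ → (Euc d →L[ℝ] Euc d)) (x₀ : Euc d) : ℝ :=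
  ⨅ N : ℕ, sSup {r | ∃ n m : ℕ, N < n - m ∧ r = lam A n m x₀}

/-- lower Bohl exponent of a vector -/
def lowerBohlVec {d : ℕ} (A : ℕ → (Euc d →L[ℝ] Euc d)) (x₀ : Euc d) : ℝ :=
  ⨆ N : ℕ, sInf {r | ∃ n m : ℕ, N < n - m ∧ r = lam A n m x₀}

/-- Bohl spectrum -/
def bohlSpectrum {d : ℕ} (A : ℕ → (Euc d →L[ℝ] Euc d)) : Set ℝ :=
  {γ | ∃ x₀ : Euc d, x₀ ≠ 0 ∧ γ ∈ Set.Icc (lowerBohlVec A x₀) (upperBohlVec A x₀)}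

/-- the γ-shifted system `e^{-γ} A` -/
def shift {d : ℕ} (A : ℕ → (Euc d →L[ℝ] Euc d)) (γ : ℝ) : ℕ → (Euc d →L[ℝ] Euc d) :=
  fun n => Real.exp (-γ) • A n

/-- Bohl dichotomy on a given pair of subspaces -/
def HasBohlDichotomyOn {d : ℕ} (A : ℕ → (Euc d →L[ℝ] Euc d))
    (L₁ L₂ : Submodule ℝ (Euc d)) : Prop :=
  ∃ α : ℝ, 0 < α ∧ ∃ C₁ C₂ : Euc d → ℝ, (∀ x, 0 < C₁ x) ∧ (∀ x, 0 < C₂ x) ∧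
    (∀ x₀ ∈ L₁, ∀ m n : ℕ, m ≤ n →
      ‖sol A n x₀‖ ≤ C₁ x₀ * Real.exp (-α * ((n : ℝ) - (m : ℝ))) * ‖sol A m x₀‖) ∧
    (∀ x₀ ∈ L₂, ∀ m n : ℕ, m ≤ n →
      C₂ x₀ * Real.exp (α * ((n : ℝ) - (m : ℝ))) * ‖sol A m x₀‖ ≤ ‖sol A n x₀‖)

/-- Bohl dichotomy -/
def HasBohlDichotomy {d : ℕ} (A : ℕ → (Euc d →L[ℝ] Euc d)) : Prop :=
  ∃ L₁ L₂ : Submodule ℝ (Euc d), IsCompl L₁ L₂ ∧ HasBohlDichotomyOn A L₁ L₂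

/-- Bohl dichotomy spectrum -/
def bdSpectrum {d : ℕ} (A : ℕ → (Euc d →L[ℝ] Euc d)) : Set ℝ :=
  {γ | ¬ HasBohlDichotomy (shift A γ)}

/-! If `β̄(x₁) < α < β < β̲(x₀)`, then `‖x(n,x₁)‖ = O(e^{αn})` and `e^{βn} = O(‖x(n,x₀)‖)`, so
`x(n,x₀ + x₁) ~ x(n,x₀)`. For nonvanishing solutions of a Lyapunov system an eventual two-sided
comparison holds for all `n`, so `ln ‖x(n,·)‖` of the two solutions differ by a bounded amount;
that changes each quotient `λ(n,m)` by `O(1/(n-m))`, which the Bohl exponents do not see. -/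

open Real Asymptotics

theorem sol_zero {d : ℕ} (A : ℕ → (Euc d →L[ℝ] Euc d)) (x : Euc d) : sol A 0 x = x := rfl

theorem sol_succ {d : ℕ} (A : ℕ → (Euc d →L[ℝ] Euc d)) (n : ℕ) (x : Euc d) :
    sol A (n + 1) x = A n (sol A n x) := by
  simp [sol, fwd]

namespace IsLyapunov

variable {d : ℕ} {A Ainv : ℕ → (Euc d →L[ℝ] Euc d)} {x : Euc d}

theorem sol_eq_inv_apply_sol_succ (hA : IsLyapunov A Ainv) (n : ℕ) :
    sol A n x = Ainv n (sol A (n + 1) x) := by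
  rw [sol_succ, ← mul_apply_eq_comp, hA.2.1 n, one_apply_eq_self]

theorem sol_ne_zero (hA : IsLyapunov A Ainv) (hx : x ≠ 0) (n : ℕ) : sol A n x ≠ 0 := by
  induction n with
  | zero => exact hx
  | succ n ih => exact fun h => ih (by rw [hA.sol_eq_inv_apply_sol_succ, h, map_zero])

theorem exists_abs_log_norm_sol_succ_sub_le (hA : IsLyapunov A Ainv) :
    ∃ L, ∀ x : Euc d, x ≠ 0 → ∀ n,
      |log ‖sol A (n + 1) x‖ - log ‖sol A n x‖| ≤ L := by
  obtain ⟨a, ha⟩ := hA.2.2.1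
  obtain ⟨b, hb⟩ := hA.2.2.2
  set C := max (max a b) 1
  have hC : 0 < C := lt_max_of_lt_right one_pos
  refine ⟨log C, fun x hx n => abs_sub_le_iff.2 ⟨?_, ?_⟩⟩ <;>
    rw [sub_le_iff_le_add, ← log_mul hC.ne' (norm_ne_zero_iff.2 (hA.sol_ne_zero hx _))] <;>
    refine log_le_log (norm_pos_iff.2 (hA.sol_ne_zero hx _)) ?_
  · rw [sol_succ]
    refine (A n).le_opNorm _ |>.trans (mul_le_mul_of_nonneg_right ?_ (norm_nonneg _))
    exact (ha ⟨n, rfl⟩).trans ((le_max_left _ _).trans (le_max_left _ _))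
  · rw [hA.sol_eq_inv_apply_sol_succ n]
    refine (Ainv n).le_opNorm _ |>.trans (mul_le_mul_of_nonneg_right ?_ (norm_nonneg _))
    exact (hb ⟨n, rfl⟩).trans ((le_max_right _ _).trans (le_max_left _ _))

theorem lam_eq (hA : IsLyapunov A Ainv) (hx : x ≠ 0) (n m : ℕ) :
    lam A n m x = (log ‖sol A n x‖ - log ‖sol A m x‖) / ((n : ℝ) - m) := by
  rw [lam, log_div (norm_ne_zero_iff.2 (hA.sol_ne_zero hx n))
    (norm_ne_zero_iff.2 (hA.sol_ne_zero hx m))]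

theorem exists_abs_lam_le (hA : IsLyapunov A Ainv) :
    ∃ L, ∀ x : Euc d, x ≠ 0 → ∀ n m : ℕ, m < n → |lam A n m x| ≤ L := by
  obtain ⟨L, hL⟩ := hA.exists_abs_log_norm_sol_succ_sub_le
  refine ⟨L, fun x hx n m hmn => ?_⟩
  have hnm : (0 : ℝ) < n - m := sub_pos.2 (Nat.cast_lt.2 hmn)
  have htelescope := dist_le_Ico_sum_of_dist_le (f := fun k => log ‖sol A k x‖)
    (d := fun _ => L) hmn.le fun _ _ => by rw [dist_comm, Real.dist_eq]; exact hL x hx _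
  rw [Finset.sum_const, Nat.card_Ico, nsmul_eq_mul, Nat.cast_sub hmn.le, Real.dist_eq,
    abs_sub_comm] at htelescope
  rwa [hA.lam_eq hx, abs_div, abs_of_pos hnm, div_le_iff₀ hnm, mul_comm]

theorem bddBelow_setOf_lam (hA : IsLyapunov A Ainv) (hx : x ≠ 0) (N : ℕ) :
    BddBelow {r | ∃ n m : ℕ, N < n - m ∧ r = lam A n m x} := by
  obtain ⟨L, hL⟩ := hA.exists_abs_lam_le
  exact ⟨-L, fun _ ⟨n, m, hnm, hr⟩ => hr ▸ (abs_le.1 (hL x hx n m (by omega))).1⟩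

theorem bddAbove_setOf_lam (hA : IsLyapunov A Ainv) (hx : x ≠ 0) (N : ℕ) :
    BddAbove {r | ∃ n m : ℕ, N < n - m ∧ r = lam A n m x} := by
  obtain ⟨L, hL⟩ := hA.exists_abs_lam_le
  exact ⟨L, fun _ ⟨n, m, hnm, hr⟩ => hr ▸ (abs_le.1 (hL x hx n m (by omega))).2⟩

theorem le_lowerBohlVec (hA : IsLyapunov A Ainv) (hx : x ≠ 0) {c : ℝ} (N : ℕ)
    (h : ∀ n m : ℕ, N < n - m → c ≤ lam A n m x) : c ≤ lowerBohlVec A x := by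
  have hbdd : BddAbove
      (Set.range fun N : ℕ => sInf {r | ∃ n m : ℕ, N < n - m ∧ r = lam A n m x}) := by
    obtain ⟨L, hL⟩ := hA.bddAbove_setOf_lam hx 0
    refine ⟨L, Set.forall_mem_range.2 fun N => ?_⟩
    exact csInf_le_of_le (hA.bddBelow_setOf_lam hx N) ⟨N + 1, 0, by omega, rfl⟩
      (hL ⟨N + 1, 0, by omega, rfl⟩)
  refine le_trans ?_ (le_ciSup hbdd N)
  exact le_csInf ⟨_, N + 1, 0, by omega, rfl⟩ fun _ ⟨n, m, hnm, hr⟩ => hr ▸ h n m hnm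

theorem exists_le_lam_of_lt_lowerBohlVec (hA : IsLyapunov A Ainv) (hx : x ≠ 0) {c : ℝ}
    (h : c < lowerBohlVec A x) : ∃ N : ℕ, ∀ n m : ℕ, N < n - m → c ≤ lam A n m x := by
  obtain ⟨N, hN⟩ := exists_lt_of_lt_ciSup h
  exact ⟨N, fun n m hnm =>
    hN.le.trans (csInf_le (hA.bddBelow_setOf_lam hx N) ⟨n, m, hnm, rfl⟩)⟩

theorem exists_lam_le_of_upperBohlVec_lt (hA : IsLyapunov A Ainv) (hx : x ≠ 0) {c : ℝ}
    (h : upperBohlVec A x < c) : ∃ N : ℕ, ∀ n m : ℕ, N < n - m → lam A n m x ≤ c := by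
  obtain ⟨N, hN⟩ := exists_lt_of_ciInf_lt h
  exact ⟨N, fun n m hnm =>
    (le_csSup (hA.bddAbove_setOf_lam hx N) ⟨n, m, hnm, rfl⟩).trans hN.le⟩

theorem norm_sol_eq_exp_mul (hA : IsLyapunov A Ainv) (hx : x ≠ 0) (n : ℕ) :
    ‖sol A n x‖ = exp (lam A n 0 x * n) * ‖x‖ := by
  have hn : lam A n 0 x * n = log (‖sol A n x‖ / ‖x‖) := by
    rcases n.eq_zero_or_pos with rfl | hn
    · simp [sol_zero, div_self (norm_ne_zero_iff.2 hx)]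
    · rw [lam, Nat.cast_zero, sub_zero, div_mul_cancel₀ _ (Nat.cast_pos.2 hn).ne', sol_zero]
  rw [hn, exp_log (div_pos (norm_pos_iff.2 (hA.sol_ne_zero hx n)) (norm_pos_iff.2 hx)),
    div_mul_cancel₀ _ (norm_ne_zero_iff.2 hx)]

theorem isBigO_exp_of_upperBohlVec_lt (hA : IsLyapunov A Ainv) {c : ℝ}
    (h : upperBohlVec A x < c) :
    (fun n => sol A n x) =O[atTop] fun n : ℕ => exp (c * n) := by
  rcases eq_or_ne x 0 with rfl | hx
  · simpa [sol] using isBigO_zero _ _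
  obtain ⟨N, hN⟩ := hA.exists_lam_le_of_upperBohlVec_lt hx h
  refine IsBigO.of_bound ‖x‖ (eventually_atTop.2 ⟨N + 1, fun n hn => ?_⟩)
  rw [hA.norm_sol_eq_exp_mul hx, norm_of_nonneg (exp_pos _).le, mul_comm ‖x‖]
  gcongr
  exact hN n 0 (by omega)

theorem exp_isBigO_of_lt_lowerBohlVec (hA : IsLyapunov A Ainv) (hx : x ≠ 0) {c : ℝ}
    (h : c < lowerBohlVec A x) :
    (fun n : ℕ => exp (c * n)) =O[atTop] fun n => sol A n x := by
  obtain ⟨N, hN⟩ := hA.exists_le_lam_of_lt_lowerBohlVec hx h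
  refine IsBigO.of_bound ‖x‖⁻¹ (eventually_atTop.2 ⟨N + 1, fun n hn => ?_⟩)
  rw [hA.norm_sol_eq_exp_mul hx, norm_of_nonneg (exp_pos _).le,
    mul_comm (exp _), inv_mul_cancel_left₀ (norm_ne_zero_iff.2 hx)]
  gcongr
  exact hN n 0 (by omega)

theorem exists_log_norm_sol_le_of_isBigO (hA : IsLyapunov A Ainv) {u v : Euc d} (hu : u ≠ 0)
    (hv : v ≠ 0) (h : (fun n => sol A n u) =O[atTop] fun n => sol A n v) :
    ∃ D, ∀ n, log ‖sol A n u‖ ≤ D + log ‖sol A n v‖ := by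
  obtain ⟨K, hK, hbound⟩ := bound_of_isBigO_nat_atTop h
  refine ⟨log K, fun n => ?_⟩
  rw [← log_mul hK.ne' (norm_ne_zero_iff.2 (hA.sol_ne_zero hv n))]
  exact log_le_log (norm_pos_iff.2 (hA.sol_ne_zero hu n)) (hbound (hA.sol_ne_zero hv n))

theorem lowerBohlVec_le_of_lam_sub_div_le (hA : IsLyapunov A Ainv) {u v : Euc d} (hu : u ≠ 0)
    (hv : v ≠ 0) (D : ℝ)
    (h : ∀ n m : ℕ, m < n → lam A n m u - D / (n - m) ≤ lam A n m v) :
    lowerBohlVec A u ≤ lowerBohlVec A v := by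
  refine le_of_forall_lt_imp_le_of_dense fun c hc => ?_
  obtain ⟨c', hcc', hc'⟩ := exists_between hc
  obtain ⟨N, hN⟩ := hA.exists_le_lam_of_lt_lowerBohlVec hu hc'
  obtain ⟨N', hN'⟩ := exists_nat_gt (D / (c' - c))
  refine hA.le_lowerBohlVec hv (max N N') fun n m hnm => ?_
  have hmn : m < n := by omega
  have hN'nm : (N' : ℝ) ≤ n - m := by
    rw [← Nat.cast_sub hmn.le]
    exact Nat.cast_le.2 (by omega)
  have hD : D / (n - m) ≤ c' - c := by
    rw [div_le_iff₀ (sub_pos.2 (Nat.cast_lt.2 hmn))]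
    nlinarith [(div_lt_iff₀ (sub_pos.2 hcc')).1 hN']
  linarith [hN n m (by omega), h n m hmn]

theorem lowerBohlVec_le_of_isTheta (hA : IsLyapunov A Ainv) {u v : Euc d} (hu : u ≠ 0)
    (hv : v ≠ 0) (h : (fun n => sol A n u) =Θ[atTop] fun n => sol A n v) :
    lowerBohlVec A u ≤ lowerBohlVec A v := by
  obtain ⟨D₁, hD₁⟩ := hA.exists_log_norm_sol_le_of_isBigO hu hv h.isBigO
  obtain ⟨D₂, hD₂⟩ := hA.exists_log_norm_sol_le_of_isBigO hv hu h.symm.isBigO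
  refine hA.lowerBohlVec_le_of_lam_sub_div_le hu hv (D₁ + D₂) fun n m hmn => ?_
  rw [hA.lam_eq hu, hA.lam_eq hv, ← sub_div, div_le_div_iff_of_pos_right
    (sub_pos.2 (Nat.cast_lt.2 hmn))]
  linarith [hD₁ n, hD₂ m]

theorem lowerBohlVec_add_of_upperBohlVec_lt (hA : IsLyapunov A Ainv) {x₀ x₁ : Euc d}
    (hx₀ : x₀ ≠ 0) (h : upperBohlVec A x₁ < lowerBohlVec A x₀) :
    lowerBohlVec A (x₀ + x₁) = lowerBohlVec A x₀ := by
  obtain ⟨α, hα, hαx₀⟩ := exists_between h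
  obtain ⟨β, hαβ, hβ⟩ := exists_between hαx₀
  have hexp : (fun n : ℕ => exp (α * n)) =o[atTop] fun n : ℕ => exp (β * n) := by
    refine isLittleO_exp_comp_exp_comp.2 ?_
    simpa only [← sub_mul] using tendsto_natCast_atTop_atTop.const_mul_atTop (sub_pos.2 hαβ)
  have hsmall : (fun n => sol A n x₁) =o[atTop] fun n => sol A n x₀ :=
    (hA.isBigO_exp_of_upperBohlVec_lt hα).trans_isLittleO
      (hexp.trans_isBigO (hA.exp_isBigO_of_lt_lowerBohlVec hx₀ hβ))
  have hequiv : (fun n => sol A n (x₀ + x₁)) ~[atTop] fun n => sol A n x₀ := by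
    have hsum : (fun n => sol A n (x₀ + x₁)) =
        (fun n => sol A n x₀) + fun n => sol A n x₁ := funext fun n => map_add _ _ _
    exact hsum ▸ IsEquivalent.refl.add_isLittleO hsmall
  have hy : x₀ + x₁ ≠ 0 := fun hy => by
    have hzero : (fun n => sol A n (x₀ + x₁)) = 0 := funext fun n => by simp [hy, sol]
    obtain ⟨n, hn⟩ := (isEquivalent_zero_iff_eventually_zero.1 (hzero ▸ hequiv.symm)).exists
    exact hA.sol_ne_zero hx₀ n hn
  exact le_antisymm (hA.lowerBohlVec_le_of_isTheta hy hx₀ hequiv.isTheta)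
    (hA.lowerBohlVec_le_of_isTheta hx₀ hy hequiv.isTheta_symm)

end IsLyapunov

theorem stmt9 {d : ℕ} (A Ainv : ℕ → (Euc d →L[ℝ] Euc d)) (hA : IsLyapunov A Ainv)
    (x₀ x₁ : Euc d) (hx₀ : x₀ ≠ 0)
    (h₀ : 0 < lowerBohlVec A x₀) (h₁ : x₁ = 0 ∨ upperBohlVec A x₁ < 0) :
    lowerBohlVec A x₀ ≤ lowerBohlVec A (x₀ + x₁) := by
  rcases h₁ with rfl | h₁
  · rw [add_zero]
  · exact (hA.lowerBohlVec_add_of_upperBohlVec_lt hx₀ (h₁.trans h₀)).ge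
end
end

section
/- The Bohl dichotomy resolvent ϱ_BD(A) is an open subset of ℝ. -/
open Filter Topology

noncomputable section

set_option synthInstance.maxHeartbeats 1000000 in
lemma fwd_shift {d : ℕ} (A : ℕ → (Euc d →L[ℝ] Euc d)) (γ : ℝ) (m k : ℕ) :
    fwd (shift A γ) m k = Real.exp (-(γ * k)) • fwd A m k := by
  induction k with
  | zero => simp [fwd]
  | succ k ih =>
    show shift A γ (m + k) * fwd (shift A γ) m k = _
    rw [ih, shift]
    ext x
    have he : Real.exp (-γ) * Real.exp (-(γ * k)) = Real.exp (-(γ * (k + 1 : ℕ))) := by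
      rw [← Real.exp_add]; push_cast; ring_nf
    simp only [ContinuousLinearMap.mul_apply, ContinuousLinearMap.smul_apply, map_smul,
      ContinuousLinearMap.coe_smul', Pi.smul_apply, smul_smul]
    rw [mul_comm (Real.exp (-(γ * (k:ℝ)))) (Real.exp (-γ)), he]
    rfl

lemma norm_sol_shift {d : ℕ} (A : ℕ → (Euc d →L[ℝ] Euc d)) (γ : ℝ) (n : ℕ) (x₀ : Euc d) :
    ‖sol (shift A γ) n x₀‖ = Real.exp (-(γ * n)) * ‖sol A n x₀‖ := by
  unfold sol
  rw [fwd_shift]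
  simp [norm_smul, Real.abs_exp]

lemma norm_sol_shift_ratio {d : ℕ} (A : ℕ → (Euc d →L[ℝ] Euc d)) (γ δ : ℝ) (n : ℕ) (x₀ : Euc d) :
    ‖sol (shift A δ) n x₀‖ = Real.exp ((γ - δ) * n) * ‖sol (shift A γ) n x₀‖ := by
  rw [norm_sol_shift, norm_sol_shift, ← mul_assoc, ← Real.exp_add]
  ring_nf

theorem stmt16 {d : ℕ} (A Ainv : ℕ → (Euc d →L[ℝ] Euc d)) (hA : IsLyapunov A Ainv) :
    IsOpen {γ : ℝ | HasBohlDichotomy (shift A γ)} := by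
  rw [Metric.isOpen_iff]
  rintro γ ⟨L₁, L₂, hc, α, hα, C₁, C₂, hC₁, hC₂, h1, h2⟩
  refine ⟨α, hα, ?_⟩
  intro γ' hγ'
  rw [Metric.mem_ball, Real.dist_eq] at hγ'
  refine ⟨L₁, L₂, hc, α - |γ' - γ|, by linarith [abs_nonneg (γ' - γ)], C₁, C₂, hC₁, hC₂, ?_, ?_⟩
  · intro x₀ hx m n hmn
    have t0 : (0:ℝ) ≤ (n:ℝ) - m := by
      have : (m:ℝ) ≤ n := by exact_mod_cast hmn
      linarith
    have habs : γ - γ' ≤ |γ' - γ| := by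
      rw [abs_sub_comm]; exact le_abs_self _
    have h := h1 x₀ hx m n hmn
    calc ‖sol (shift A γ') n x₀‖
        = Real.exp ((γ - γ') * n) * ‖sol (shift A γ) n x₀‖ :=
          norm_sol_shift_ratio A γ γ' n x₀
      _ ≤ Real.exp ((γ - γ') * n) *
          (C₁ x₀ * Real.exp (-α * ((n:ℝ) - m)) * ‖sol (shift A γ) m x₀‖) := by
          exact mul_le_mul_of_nonneg_left h (Real.exp_nonneg _)
      _ = Real.exp ((γ - γ') * n) *
          (C₁ x₀ * Real.exp (-α * ((n:ℝ) - m)) *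
            (Real.exp ((γ' - γ) * m) * ‖sol (shift A γ') m x₀‖)) := by
          rw [← norm_sol_shift_ratio A γ' γ m x₀]
      _ = C₁ x₀ * Real.exp ((γ - γ' - α) * ((n:ℝ) - m)) * ‖sol (shift A γ') m x₀‖ := by
          have h3 : Real.exp ((γ - γ') * n) * Real.exp (-α * ((n:ℝ) - m)) *
              Real.exp ((γ' - γ) * m) = Real.exp ((γ - γ' - α) * ((n:ℝ) - m)) := by
            rw [← Real.exp_add, ← Real.exp_add]; ring_nf
          rw [← h3]; ring
      _ ≤ C₁ x₀ * Real.exp (-(α - |γ' - γ|) * ((n:ℝ) - m)) * ‖sol (shift A γ') m x₀‖ := by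
          have : (γ - γ' - α) * ((n:ℝ) - m) ≤ -(α - |γ' - γ|) * ((n:ℝ) - m) := by
            nlinarith
          exact mul_le_mul_of_nonneg_right
            (mul_le_mul_of_nonneg_left (Real.exp_le_exp.mpr this) (le_of_lt (hC₁ x₀)))
            (norm_nonneg _)
  · intro x₀ hx m n hmn
    have t0 : (0:ℝ) ≤ (n:ℝ) - m := by
      have : (m:ℝ) ≤ n := by exact_mod_cast hmn
      linarith
    have habs : -|γ' - γ| ≤ γ - γ' := by
      rw [abs_sub_comm]; exact neg_abs_le _
    have h := h2 x₀ hx m n hmn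
    calc C₂ x₀ * Real.exp ((α - |γ' - γ|) * ((n:ℝ) - m)) * ‖sol (shift A γ') m x₀‖
        ≤ C₂ x₀ * Real.exp ((γ - γ' + α) * ((n:ℝ) - m)) * ‖sol (shift A γ') m x₀‖ := by
          have : (α - |γ' - γ|) * ((n:ℝ) - m) ≤ (γ - γ' + α) * ((n:ℝ) - m) := by
            nlinarith
          exact mul_le_mul_of_nonneg_right
            (mul_le_mul_of_nonneg_left (Real.exp_le_exp.mpr this) (le_of_lt (hC₂ x₀)))
            (norm_nonneg _)
      _ = Real.exp ((γ - γ') * n) *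
          (C₂ x₀ * Real.exp (α * ((n:ℝ) - m)) *
            (Real.exp ((γ' - γ) * m) * ‖sol (shift A γ') m x₀‖)) := by
          have h3 : Real.exp ((γ - γ') * n) * Real.exp (α * ((n:ℝ) - m)) *
              Real.exp ((γ' - γ) * m) = Real.exp ((γ - γ' + α) * ((n:ℝ) - m)) := by
            rw [← Real.exp_add, ← Real.exp_add]; ring_nf
          rw [← h3]; ring
      _ = Real.exp ((γ - γ') * n) *
          (C₂ x₀ * Real.exp (α * ((n:ℝ) - m)) * ‖sol (shift A γ) m x₀‖) := by
          rw [← norm_sol_shift_ratio A γ' γ m x₀]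
      _ ≤ Real.exp ((γ - γ') * n) * ‖sol (shift A γ) n x₀‖ :=
          mul_le_mul_of_nonneg_left h (Real.exp_nonneg _)
      _ = ‖sol (shift A γ') n x₀‖ := (norm_sol_shift_ratio A γ γ' n x₀).symm
end
end
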